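/- arXiv:1905.13259 — 4 statements merged into one kernel-verified Lean document; each statement's English description precedes it below -/
import Mathlib

section
/- Suppose for each t > 0 the Lévy density f_t satisfies the Chapman–Kolmogorov identity and lim_{t→∞} f_t(x)/f_t(0) = 1 locally uniformly in x, together with lim_{t→∞} E[g(X_t)]/‖exp(tψ)‖_{L¹} = (2π)^{-1}∫ g for all g ∈ L¹. Then for every fixed t ≥ 0, lim_{r→∞} f_{r−t}(x)/f_r(0) = 1 locally uniformly in x. -/
open MeasureTheory Filter Set
open scoped ENNReal Topology

/-- Suppose the Lévy densities `f t` satisfy the Chapman–Kolmogorov identity,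
`f t x / f t 0 → 1` locally uniformly in `x` as `t → ∞`, and
`(∫ g y * f t y dy) / ‖exp (t ψ)‖_{L¹} → (2π)⁻¹ ∫ g` for all integrable `g`.
Then for every fixed `t ≥ 0`, `f (r - t) x / f r 0 → 1` locally uniformly in `x`
as `r → ∞`. -/
theorem stmt4 (ψ : ℝ → ℝ) (f : ℝ → ℝ → ℝ)
    (hnn : ∀ t x : ℝ, 0 < t → 0 ≤ f t x)
    (hmeas : ∀ t : ℝ, 0 < t → Measurable (f t))
    (hpos : ∀ t : ℝ, 0 < t → 0 < f t 0)
    (hprob : ∀ t : ℝ, 0 < t → ∫ x : ℝ, f t x = 1)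
    (hbdd : ∀ t : ℝ, 0 < t → ∃ C : ℝ, ∀ x, f t x ≤ C)
    (hCK : ∀ s t : ℝ, 0 < s → 0 < t → ∀ x : ℝ,
      f (s + t) x = ∫ y : ℝ, f t (x - y) * f s y)
    (hnorm : ∀ t : ℝ, 0 < t →
      f t 0 = (2 * Real.pi)⁻¹ * ∫ y : ℝ, |Real.exp (t * ψ y)|)
    (hloc : TendstoLocallyUniformly (fun t x => f t x / f t 0) (fun _ => 1) atTop)
    (hg : ∀ g : ℝ → ℝ, Integrable g →
      Tendsto (fun t => (∫ y : ℝ, g y * f t y) / ∫ y : ℝ, |Real.exp (t * ψ y)|) atTop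
        (𝓝 ((2 * Real.pi)⁻¹ * ∫ y : ℝ, g y))) :
    ∀ t : ℝ, 0 ≤ t →
      TendstoLocallyUniformly (fun r x => f (r - t) x / f r 0) (fun _ => 1) atTop := by
  intro t ht
  rcases ht.eq_or_lt with rfl | ht
  · simpa using hloc
  -- Step 1: the ratio `f (r - t) 0 / f r 0 → 1`.
  have hint : Integrable (f t) := by
    by_contra h
    have h1 := hprob t ht
    rw [integral_undef h] at h1
    norm_num at h1
  have hgint : Integrable (fun y : ℝ => f t (-y)) := hint.comp_neg
  have hgval : (∫ y : ℝ, f t (-y)) = 1 := by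
    rw [integral_neg_eq_self]; exact hprob t ht
  have hπ : (2 * Real.pi) ≠ 0 := by positivity
  have h0 := hg _ hgint
  rw [hgval, mul_one] at h0
  have h1 : Tendsto (fun r => f (r + t) 0 / f r 0) atTop (𝓝 1) := by
    have h2 : Tendsto (fun r => (2 * Real.pi) *
        ((∫ y : ℝ, f t (-y) * f r y) / ∫ y : ℝ, |Real.exp (r * ψ y)|)) atTop
        (𝓝 ((2 * Real.pi) * (2 * Real.pi)⁻¹)) := tendsto_const_nhds.mul h0
    rw [mul_inv_cancel₀ hπ] at h2
    refine h2.congr' ?_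
    filter_upwards [eventually_gt_atTop (0 : ℝ)] with r hr
    have hck := hCK r t hr ht 0
    simp only [zero_sub] at hck
    have hNr : (∫ y : ℝ, |Real.exp (r * ψ y)|) = 2 * Real.pi * f r 0 := by
      rw [hnorm r hr]; field_simp
    rw [hNr, ← hck]
    have hfr : f r 0 ≠ 0 := ne_of_gt (hpos r hr)
    field_simp
  have h3 : Tendsto (fun r => f r 0 / f (r + t) 0) atTop (𝓝 1) := by
    have := (h1.inv₀ one_ne_zero)
    rw [inv_one] at this
    refine this.congr fun r => ?_
    rw [inv_div]
  have hratio : Tendsto (fun r => f (r - t) 0 / f r 0) atTop (𝓝 1) := by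
    have hmap : Tendsto (fun r : ℝ => r - t) atTop atTop :=
      tendsto_atTop_add_const_right _ (-t) tendsto_id
    have := h3.comp hmap
    refine this.congr fun r => ?_
    simp [Function.comp, sub_add_cancel]
  -- Step 2: combine with `hloc` shifted by `t`.
  have hloc' : TendstoLocallyUniformly (fun r x => f (r - t) x / f (r - t) 0)
      (fun _ => (1 : ℝ)) atTop := by
    rw [Metric.tendstoLocallyUniformly_iff] at hloc ⊢
    intro ε hε x
    obtain ⟨s, hs, hev⟩ := hloc ε hε x
    refine ⟨s, hs, ?_⟩
    have hmap : Tendsto (fun r : ℝ => r - t) atTop atTop :=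
      tendsto_atTop_add_const_right _ (-t) tendsto_id
    exact hmap.eventually hev
  rw [Metric.tendstoLocallyUniformly_iff] at hloc' ⊢
  intro ε hε x
  set ε1 : ℝ := min 1 (ε / 4) with hε1
  have hε1pos : 0 < ε1 := lt_min one_pos (by linarith)
  obtain ⟨s, hs, hev⟩ := hloc' ε1 hε1pos x
  refine ⟨s, hs, ?_⟩
  filter_upwards [hev, hratio.eventually (Metric.ball_mem_nhds 1 hε1pos),
    eventually_gt_atTop t, eventually_gt_atTop (0 : ℝ)] with r hA hB hrt hr0
  intro y hy
  have hA' : |1 - f (r - t) y / f (r - t) 0| < ε1 := by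
    simpa [Real.dist_eq] using hA y hy
  have hB' : |f (r - t) 0 / f r 0 - 1| < ε1 := by
    simpa [Real.dist_eq] using hB
  have hfr : f r 0 ≠ 0 := ne_of_gt (hpos r hr0)
  have hfrt : f (r - t) 0 ≠ 0 := ne_of_gt (hpos (r - t) (by linarith))
  have key : f (r - t) y / f r 0 =
      (f (r - t) y / f (r - t) 0) * (f (r - t) 0 / f r 0) := by
    field_simp
  rw [Real.dist_eq, key]
  set A := f (r - t) y / f (r - t) 0
  set B := f (r - t) 0 / f r 0
  have hAbd : |A| ≤ 1 + ε1 := by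
    have : |A| - |(1 : ℝ)| ≤ |1 - A| := by
      have := abs_sub_abs_le_abs_sub A 1
      rwa [abs_sub_comm] at this
    simp only [abs_one] at this
    linarith [le_of_lt hA']
  have : |1 - A * B| ≤ |1 - A| + |A| * |B - 1| := by
    have : (1 : ℝ) - A * B = (1 - A) + A * (1 - B) := by ring
    rw [this]
    calc |(1 - A) + A * (1 - B)| ≤ |1 - A| + |A * (1 - B)| := abs_add_le _ _
      _ = |1 - A| + |A| * |1 - B| := by rw [abs_mul]
      _ = |1 - A| + |A| * |B - 1| := by rw [abs_sub_comm (1:ℝ) B]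
  have hε1le : ε1 ≤ ε / 4 := min_le_right _ _
  have hε1le1 : ε1 ≤ 1 := min_le_left _ _
  have h4 : |A| * |B - 1| ≤ (1 + ε1) * ε1 :=
    mul_le_mul hAbd (le_of_lt hB') (abs_nonneg _) (by linarith)
  calc |1 - A * B| ≤ |1 - A| + |A| * |B - 1| := this
    _ < ε1 + (1 + ε1) * ε1 := by
        have : |1 - A| < ε1 := hA'
        nlinarith [abs_nonneg (B - 1)]
    _ ≤ ε1 + 2 * ε1 := by nlinarith
    _ ≤ 3 * (ε / 4) := by linarith
    _ < ε := by linarith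
end

section
/- Let ζ^z be a process and τ a strictly positive random time such that, conditionally on {τ = r}, ζ^z has the law of the Lévy bridge X^{r,z} (whose marginal at any t < r is absolutely continuous), and ζ^z_t = z on {τ ≤ t}. Then for every t > 0, P({ζ^z_t = z} Δ {τ ≤ t}) = 0; consequently τ is a stopping time with respect to the completed natural filtration of ζ^z. -/
open MeasureTheory Filter Set
open scoped ENNReal Topology symmDiff

private lemma bind_apply_ae {α β : Type*} [MeasurableSpace α] [MeasurableSpace β]
    {m : Measure α} {f : α → Measure β} {s : Set β} (hs : MeasurableSet s)
    (hf : AEMeasurable f m) : m.bind f s = ∫⁻ a, f a s ∂m := by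
  rw [Measure.bind, Measure.join_apply hs,
    lintegral_map' (Measure.measurable_coe hs).aemeasurable hf]

/-- Let `ζ` be a process and `τ` a strictly positive random time such that, conditionally
on `{τ = r}`, `ζ_t` has the law `μ r t` of the Lévy bridge marginal (absolutely continuous
before time `r`, hence not charging `{z}`, and equal to `δ_z` from time `r` on). Then for
every `t > 0`, `P({ζ_t = z} Δ {τ ≤ t}) = 0`; consequently `τ` is a stopping time with
respect to the completed natural filtration of `ζ`. -/
theorem stmt8 {Ω : Type*} [MeasurableSpace Ω] (P : Measure Ω) [IsProbabilityMeasure P]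
    (ζ : ℝ → Ω → ℝ) (τ : Ω → ℝ) (z : ℝ)
    (hζ : ∀ t, Measurable (ζ t)) (hτ : Measurable τ)
    (hτpos : ∀ᵐ ω ∂P, 0 < τ ω)
    (μ : ℝ → ℝ → Measure ℝ)
    (hμprob : ∀ r t, IsProbabilityMeasure (μ r t))
    (habs : ∀ r t : ℝ, 0 < t → t < r → μ r t {z} = 0)
    (hend : ∀ r t : ℝ, 0 < r → r ≤ t → μ r t = Measure.dirac z)
    (hjoint : ∀ t : ℝ, 0 < t → Measure.map (fun ω => (τ ω, ζ t ω)) P =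
      (Measure.map τ P).bind (fun r => (Measure.dirac r).prod (μ r t))) :
    (∀ t : ℝ, 0 < t → P (symmDiff {ω | ζ t ω = z} {ω | τ ω ≤ t}) = 0) ∧
    ∀ t : ℝ,
      MeasurableSet[(⨆ s ∈ Set.Icc (0 : ℝ) t, MeasurableSpace.comap (ζ s) inferInstance) ⊔
        MeasurableSpace.generateFrom {s : Set Ω | P s = 0}] {ω | τ ω ≤ t} := by
  have key : ∀ t : ℝ, 0 < t → P (symmDiff {ω | ζ t ω = z} {ω | τ ω ≤ t}) = 0 := by
    intro t ht
    have hpair : Measurable fun ω => (τ ω, ζ t ω) := hτ.prodMk (hζ t)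
    set g : ℝ → Measure (ℝ × ℝ) := fun r => (Measure.dirac r).prod (μ r t) with hg
    have hgae : AEMeasurable g (Measure.map τ P) := by
      by_contra h
      have h0 : (Measure.map τ P).bind g = 0 := by
        rw [Measure.bind, Measure.map_of_not_aemeasurable h, Measure.join_zero]
      have := hjoint t ht
      rw [h0] at this
      have h1 : Measure.map (fun ω => (τ ω, ζ t ω)) P Set.univ = 1 := by
        rw [Measure.map_apply hpair MeasurableSet.univ]
        simp
      rw [this] at h1
      simp at h1
    -- set 1 : {τ > t, ζ t = z}
    have hS1 : MeasurableSet (Set.Ioi t ×ˢ ({z} : Set ℝ)) :=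
      measurableSet_Ioi.prod (measurableSet_singleton z)
    have hS2 : MeasurableSet (Set.Iic t ×ˢ ({z} : Set ℝ)ᶜ) :=
      measurableSet_Iic.prod (measurableSet_singleton z).compl
    have hg1 : ∀ r, g r (Set.Ioi t ×ˢ ({z} : Set ℝ)) = 0 := by
      intro r
      haveI := hμprob r t
      rw [hg]
      rw [Measure.prod_prod]
      by_cases h : t < r
      · rw [habs r t ht h, mul_zero]
      · rw [Measure.dirac_apply' _ measurableSet_Ioi]
        simp only [Set.indicator_apply, Set.mem_Ioi, h, if_false, zero_mul]
    have hg2 : ∀ r, 0 < r → g r (Set.Iic t ×ˢ ({z} : Set ℝ)ᶜ) = 0 := by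
      intro r hr
      haveI := hμprob r t
      rw [hg]
      rw [Measure.prod_prod]
      by_cases h : r ≤ t
      · rw [hend r t hr h]
        simp
      · rw [Measure.dirac_apply' _ measurableSet_Iic]
        simp only [Set.indicator_apply, Set.mem_Iic, h, if_false, zero_mul]
    have hpos_map : ∀ᵐ r ∂(Measure.map τ P), 0 < r :=
      (ae_map_iff hτ.aemeasurable measurableSet_Ioi).mpr hτpos
    have h1 : P ((fun ω => (τ ω, ζ t ω)) ⁻¹' (Set.Ioi t ×ˢ ({z} : Set ℝ))) = 0 := by
      rw [← Measure.map_apply hpair hS1, hjoint t ht, bind_apply_ae hS1 hgae]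
      simp only [hg1]
      exact lintegral_zero
    have h2 : P ((fun ω => (τ ω, ζ t ω)) ⁻¹' (Set.Iic t ×ˢ ({z} : Set ℝ)ᶜ)) = 0 := by
      rw [← Measure.map_apply hpair hS2, hjoint t ht, bind_apply_ae hS2 hgae]
      rw [show (0 : ℝ≥0∞) = ∫⁻ _, 0 ∂(Measure.map τ P) by simp]
      refine lintegral_congr_ae ?_
      filter_upwards [hpos_map] with r hr
      exact hg2 r hr
    have hsub : symmDiff {ω | ζ t ω = z} {ω | τ ω ≤ t} =
        (fun ω => (τ ω, ζ t ω)) ⁻¹' (Set.Ioi t ×ˢ ({z} : Set ℝ)) ∪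
        (fun ω => (τ ω, ζ t ω)) ⁻¹' (Set.Iic t ×ˢ ({z} : Set ℝ)ᶜ) := by
      ext ω
      simp only [symmDiff_def, Set.sup_eq_union, Set.mem_union, Set.mem_diff, Set.mem_setOf_eq,
        Set.mem_preimage, Set.mem_prod, Set.mem_Ioi, Set.mem_Iic, Set.mem_singleton_iff,
        Set.mem_compl_iff, not_le]
      tauto
    rw [hsub]
    exact measure_union_null h1 h2
  refine ⟨key, fun t => ?_⟩
  by_cases ht : 0 < t
  · have hz : MeasurableSet[(⨆ s ∈ Set.Icc (0 : ℝ) t,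
        MeasurableSpace.comap (ζ s) inferInstance) ⊔
        MeasurableSpace.generateFrom {s : Set Ω | P s = 0}] {ω | ζ t ω = z} := by
      refine le_sup_left (α := MeasurableSpace Ω) _ ?_
      refine le_iSup₂ (f := fun s (_ : s ∈ Set.Icc (0:ℝ) t) =>
        MeasurableSpace.comap (ζ s) inferInstance) t ⟨le_of_lt ht, le_refl t⟩ _ ?_
      exact ⟨{z}, measurableSet_singleton z, rfl⟩
    have hnull : MeasurableSet[(⨆ s ∈ Set.Icc (0 : ℝ) t,
        MeasurableSpace.comap (ζ s) inferInstance) ⊔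
        MeasurableSpace.generateFrom {s : Set Ω | P s = 0}]
        (symmDiff {ω | ζ t ω = z} {ω | τ ω ≤ t}) := by
      refine le_sup_right (α := MeasurableSpace Ω) _ ?_
      exact MeasurableSpace.measurableSet_generateFrom (key t ht)
    have : {ω | τ ω ≤ t} = symmDiff {ω | ζ t ω = z}
        (symmDiff {ω | ζ t ω = z} {ω | τ ω ≤ t}) := by
      rw [symmDiff_symmDiff_cancel_left]
    rw [this]
    exact hz.symmDiff hnull
  · push_neg at ht
    refine le_sup_right (α := MeasurableSpace Ω) _ ?_
    refine MeasurableSpace.measurableSet_generateFrom ?_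
    have hsub : {ω | τ ω ≤ t} ⊆ {ω | ¬ 0 < τ ω} := fun ω hω h0 =>
      absurd (lt_of_lt_of_le h0 (hω.trans ht)) (lt_irrefl 0)
    exact measure_mono_null hsub (ae_iff.mp hτpos)
end

section
/- Under the short-time boundedness assumption (for every δ > 0 there exist t̂ > 0 and C < ∞ with sup_{0<t<t̂} sup_{|x|>δ} f_t(x) ≤ C), joint continuity of (t,x) ↦ f_t(x) on (0,∞)×ℝ, and lim_{r→∞} f_{r−t}(z−x)/f_r(z) = 1 locally uniformly in x for each t, one has sup over any compact K ⊂ (0,∞)×(ℝ∖{z}) and r > 0 of [f_{r−t}(z−x)/f_r(z)]·1_{t<r} is finite. -/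
open MeasureTheory Filter Set
open scoped ENNReal Topology

/-- Uniform boundedness (over shifts in a compact interval) of `φ u / φ (u + s)` for large
`u`, given pointwise convergence to `1` for each fixed shift; Baire category argument. -/
private lemma uct_bdd (φ : ℝ → ℝ) (hφc : ContinuousOn φ (Set.Ioi 0))
    (hφpos : ∀ r : ℝ, 0 < r → 0 < φ r)
    (hconv : ∀ s : ℝ, 0 ≤ s → Tendsto (fun u : ℝ => φ u / φ (u + s)) atTop (𝓝 1))
    (c : ℝ) (hc : 0 < c) :
    ∃ R M : ℝ, 0 ≤ M ∧ ∀ u : ℝ, R ≤ u → ∀ s : ℝ, 0 ≤ s → s ≤ c → φ u / φ (u + s) ≤ M := by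
  classical
  set F : ℕ → Set ℝ := fun n =>
    Icc 0 c ∩ ⋂ (u : ℝ) (_ : (n : ℝ) + 1 ≤ u),
      (Ici 0 ∩ {s : ℝ | |φ u / φ (u + s) - 1| ≤ 1/2}) with hF
  have hFmem : ∀ n s, s ∈ F n ↔ s ∈ Icc 0 c ∧
      ∀ u : ℝ, (n : ℝ) + 1 ≤ u → |φ u / φ (u + s) - 1| ≤ 1/2 := by
    intro n s
    simp only [hF, mem_inter_iff, mem_iInter, mem_Ici, mem_setOf_eq]
    constructor
    · rintro ⟨h1, h2⟩; exact ⟨h1, fun u hu => (h2 u hu).2⟩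
    · rintro ⟨h1, h2⟩; exact ⟨h1, fun u hu => ⟨h1.1, h2 u hu⟩⟩
  have hFclosed : ∀ n, IsClosed (F n) := by
    intro n
    apply isClosed_Icc.inter
    refine isClosed_iInter fun u => isClosed_iInter fun hu => ?_
    have hn1 : (0:ℝ) < (n : ℝ) + 1 := by positivity
    have hupos : (0:ℝ) < u := lt_of_lt_of_le hn1 hu
    have hg : ContinuousOn (fun s : ℝ => φ u / φ (u + s)) (Ici 0) := by
      apply ContinuousOn.div continuousOn_const
      · exact hφc.comp ((continuous_const.add continuous_id).continuousOn)
          (fun s hs => by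
            simp only [mem_Ioi]
            have : (0:ℝ) ≤ s := hs
            linarith)
      · intro s hs
        have : (0:ℝ) ≤ s := hs
        exact (hφpos _ (by linarith)).ne'
    have hset : (Ici 0 ∩ {s : ℝ | |φ u / φ (u + s) - 1| ≤ 1/2}) =
        (Ici 0 ∩ (fun s : ℝ => φ u / φ (u + s)) ⁻¹' {y : ℝ | |y - 1| ≤ 1/2}) := rfl
    rw [hset]
    exact hg.preimage_isClosed_of_isClosed isClosed_Ici
      (isClosed_le ((continuous_id.sub continuous_const).abs) continuous_const)
  set G : ℕ → Set ℝ := fun n => F n ∪ (Iic 0 ∪ Ici c) with hG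
  have hGclosed : ∀ n, IsClosed (G n) :=
    fun n => (hFclosed n).union (isClosed_Iic.union isClosed_Ici)
  have hGunion : (⋃ n, G n) = univ := by
    ext s
    simp only [mem_iUnion, mem_univ, iff_true]
    by_cases hs0 : s ≤ 0
    · exact ⟨0, Or.inr (Or.inl hs0)⟩
    by_cases hsc : c ≤ s
    · exact ⟨0, Or.inr (Or.inr hsc)⟩
    push_neg at hs0 hsc
    have hs : (0:ℝ) ≤ s := hs0.le
    have h2 : ∀ᶠ u in atTop, |φ u / φ (u + s) - 1| ≤ 1/2 := by
      have h3 := Metric.tendsto_nhds.mp (hconv s hs) (1/2) (by norm_num)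
      filter_upwards [h3] with u hu
      rw [Real.dist_eq] at hu
      exact hu.le
    obtain ⟨N, hN⟩ := eventually_atTop.mp h2
    obtain ⟨n, hn⟩ := exists_nat_ge N
    exact ⟨n, Or.inl ((hFmem n s).mpr ⟨⟨hs, hsc.le⟩,
      fun u hu => hN u (hn.trans (by linarith))⟩)⟩
  have hdense := dense_iUnion_interior_of_closed hGclosed hGunion
  obtain ⟨p, hpD, hpI⟩ := hdense.exists_mem_open isOpen_Ioo (nonempty_Ioo.mpr hc)
  obtain ⟨n, hpn⟩ := mem_iUnion.mp hpD
  have hopen : IsOpen (interior (G n) ∩ Ioo 0 c) := isOpen_interior.inter isOpen_Ioo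
  obtain ⟨ε, hε, hball⟩ := Metric.isOpen_iff.mp hopen p ⟨hpn, hpI⟩
  set η := ε/2 with hη
  have hηpos : 0 < η := by positivity
  have hmem : ∀ t : ℝ, 0 ≤ t → t ≤ η → (p + t) ∈ F n := by
    intro t ht1 ht2
    have hpt : p + t ∈ Metric.ball p ε := by
      rw [Real.ball_eq_Ioo]
      constructor <;> [linarith; linarith]
    have h3 := hball hpt
    have h4 : p + t ∈ G n := interior_subset h3.1
    have h5 : 0 < p + t := h3.2.1
    have h6 : p + t < c := h3.2.2
    rcases h4 with h | h | h
    · exact h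
    · exact absurd h (by simpa using h5)
    · exact absurd h (by simpa using h6)
  have hpF : p ∈ F n := by simpa using hmem 0 le_rfl hηpos.le
  have step : ∀ u : ℝ, (n : ℝ) + 1 ≤ u → ∀ t : ℝ, 0 ≤ t → t ≤ η → φ u / φ (u + t) ≤ 3 := by
    intro u hu t ht1 ht2
    have hu1 : (1:ℝ) ≤ u := by
      have := Nat.cast_nonneg (α := ℝ) n
      linarith
    have hppos : (0:ℝ) < p := hpI.1
    have ha := hφpos u (by linarith)
    have hb := hφpos (u + t) (by linarith)
    have hd := hφpos (u + t + p) (by linarith)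
    have h1 := ((hFmem n (p + t)).mp (hmem t ht1 ht2)).2 u hu
    have h2 := ((hFmem n p).mp hpF).2 (u + t) (by linarith)
    have e : u + (p + t) = u + t + p := by ring
    rw [e] at h1
    have q1 : φ u / φ (u + t + p) ≤ 3/2 := by linarith [(abs_le.mp h1).2]
    have q2 : (1:ℝ)/2 ≤ φ (u + t) / φ (u + t + p) := by linarith [(abs_le.mp h2).1]
    rw [div_le_iff₀ hb]
    rw [div_le_iff₀ hd] at q1
    rw [le_div_iff₀ hd] at q2
    linarith
  have key : ∀ k : ℕ, ∀ u : ℝ, (n : ℝ) + 1 ≤ u → ∀ t : ℝ, 0 ≤ t → t ≤ ((k : ℝ) + 1) * η →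
      φ u / φ (u + t) ≤ 3 ^ (k + 1) := by
    intro k
    induction k with
    | zero =>
      intro u hu t ht1 ht2
      have := step u hu t ht1 (by push_cast at ht2; linarith)
      simpa using this
    | succ k ih =>
      intro u hu t ht1 ht2
      push_cast at ht2
      by_cases h : t ≤ η
      · calc φ u / φ (u + t) ≤ 3 := step u hu t ht1 h
          _ = 3 ^ 1 := (pow_one 3).symm
          _ ≤ 3 ^ (k + 1 + 1) := pow_le_pow_right₀ (by norm_num) (by omega)
      · push_neg at h
        have h1 : φ u / φ (u + η) ≤ 3 := step u hu η hηpos.le le_rfl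
        have h2 := ih (u + η) (by linarith) (t - η) (by linarith) (by push_cast; linarith)
        have e : u + η + (t - η) = u + t := by ring
        rw [e] at h2
        have hu1 : (1:ℝ) ≤ u := by
          have := Nat.cast_nonneg (α := ℝ) n
          linarith
        have ha := hφpos u (by linarith)
        have hb := hφpos (u + η) (by linarith)
        have hc2 := hφpos (u + t) (by linarith)
        have heq : φ u / φ (u + t) = (φ u / φ (u + η)) * (φ (u + η) / φ (u + t)) := by
          field_simp
        rw [heq]
        calc (φ u / φ (u + η)) * (φ (u + η) / φ (u + t)) ≤ 3 * 3 ^ (k + 1) :=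
              mul_le_mul h1 h2 (div_nonneg hb.le hc2.le) (by norm_num)
          _ = 3 ^ (k + 1 + 1) := by ring
  obtain ⟨k, hk⟩ := exists_nat_ge (c / η)
  refine ⟨(n : ℝ) + 1, 3 ^ (k + 1), by positivity, ?_⟩
  intro u hu s hs1 hs2
  have hck : c ≤ (k : ℝ) * η := (div_le_iff₀ hηpos).mp hk
  exact key k u hu s hs1 (by nlinarith)

/-- Under the short-time boundedness assumption (for every `δ > 0` there exist `t̂ > 0` and
`C < ∞` with `sup_{0<t<t̂} sup_{|x|>δ} f t x ≤ C`), joint continuity of `(t,x) ↦ f t x` on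
`(0,∞) × ℝ`, and `f (r-t) (z-x) / f r z → 1` locally uniformly in `x` as `r → ∞` for each
`t`, the sup over any compact `K ⊆ (0,∞) × (ℝ ∖ {z})` and `r > 0` of
`(f (r-t) (z-x) / f r z) 1_{t<r}` is finite. -/
theorem stmt16 (f : ℝ → ℝ → ℝ) (z : ℝ)
    (hfnn : ∀ t x : ℝ, 0 < t → 0 ≤ f t x)
    (hzpos : ∀ r : ℝ, 0 < r → 0 < f r z)
    (hshort : ∀ δ : ℝ, 0 < δ → ∃ th : ℝ, 0 < th ∧ ∃ C : ℝ,
      ∀ t x : ℝ, 0 < t → t < th → δ < |x| → f t x ≤ C)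
    (hcont : ContinuousOn (fun p : ℝ × ℝ => f p.1 p.2) (Set.Ioi 0 ×ˢ Set.univ))
    (hlim : ∀ t : ℝ, 0 ≤ t → TendstoLocallyUniformly
      (fun r x => f (r - t) (z - x) / f r z) (fun _ => 1) atTop) :
    ∀ K : Set (ℝ × ℝ), IsCompact K → K ⊆ Set.Ioi 0 ×ˢ {x : ℝ | x ≠ z} →
      ∃ M : ℝ, ∀ p ∈ K, ∀ r : ℝ, 0 < r →
        (if p.1 < r then f (r - p.1) (z - p.2) / f r z else 0) ≤ M := by
  intro K hK hKsub
  rcases K.eq_empty_or_nonempty with hKe | hne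
  · exact ⟨0, by simp [hKe]⟩
  -- continuity and positivity of φ := f · z
  have hφc : ContinuousOn (fun r : ℝ => f r z) (Ioi 0) :=
    hcont.comp (Continuous.continuousOn (continuous_id.prodMk continuous_const))
      (fun r hr => ⟨hr, mem_univ z⟩)
  -- pointwise convergence of denominator ratios
  have hconv : ∀ s : ℝ, 0 ≤ s →
      Tendsto (fun u : ℝ => f u z / f (u + s) z) atTop (𝓝 1) := by
    intro s hs
    have h0 := hlim s hs
    rw [tendstoLocallyUniformly_iff_forall_isCompact] at h0
    have h1 := (h0 {0} isCompact_singleton).tendsto_at (mem_singleton 0)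
    have h2 := h1.comp (tendsto_atTop_add_const_right atTop s tendsto_id)
    have heq : ((fun r : ℝ => f (r - s) (z - 0) / f r z) ∘ fun u : ℝ => id u + s)
        = fun u : ℝ => f u z / f (u + s) z := by
      funext u
      simp [Function.comp]
    rwa [heq] at h2
  -- extremes over K
  obtain ⟨pa, hpaK, hpa⟩ := hK.exists_isMinOn hne continuous_fst.continuousOn
  obtain ⟨pb, hpbK, hpb⟩ := hK.exists_isMaxOn hne continuous_fst.continuousOn
  obtain ⟨pd, hpdK, hpd⟩ := hK.exists_isMinOn hne
    ((continuous_snd.sub continuous_const).abs.continuousOn)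
  set a := pa.1 with haa
  set b := pb.1 with hbb
  set δ := |pd.2 - z| with hδδ
  have ha : 0 < a := (hKsub hpaK).1
  have hb0 : 0 < b := lt_of_lt_of_le ha (isMinOn_iff.mp hpa pb hpbK)
  have hδ0 : 0 < δ := abs_pos.mpr (sub_ne_zero.mpr (hKsub hpdK).2)
  -- short-time bound
  obtain ⟨th, hth, C, hC⟩ := hshort (δ/2) (by positivity)
  -- uniform (on compact x-set) spatial comparison at large times
  have hXc : IsCompact (Prod.snd '' K) := hK.image continuous_snd
  have h00 := hlim 0 le_rfl
  rw [tendstoLocallyUniformly_iff_forall_isCompact] at h00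
  have hu0 := h00 _ hXc
  rw [Metric.tendstoUniformlyOn_iff] at hu0
  obtain ⟨R₁, hR₁⟩ := eventually_atTop.mp (hu0 1 one_pos)
  -- uniform boundedness of denominator ratios (Baire)
  obtain ⟨R₂, M₁, hM₁0, hM₁⟩ := uct_bdd (fun r => f r z) hφc (fun r hr => hzpos r hr)
    hconv b hb0
  set R₀ : ℝ := max (max R₁ R₂) 0 + b + 1 with hR₀
  have haR₀ : a ≤ R₀ := by
    have h1 : a ≤ b := isMinOn_iff.mp hpa pb hpbK
    have h2 : (0:ℝ) ≤ max (max R₁ R₂) 0 := le_max_right _ _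
    linarith
  -- min of denominator on compact r-range
  obtain ⟨r₀, hr₀mem, hr₀⟩ := isCompact_Icc.exists_isMinOn (nonempty_Icc.mpr haR₀)
    (hφc.mono (fun x hx => lt_of_lt_of_le ha hx.1))
  set m := f r₀ z with hmm
  have hm : 0 < m := hzpos r₀ (lt_of_lt_of_le ha hr₀mem.1)
  -- bound on numerator for intermediate times
  have hTcomp : IsCompact ((Icc th R₀) ×ˢ ((fun x : ℝ => z - x) '' (Prod.snd '' K))) :=
    isCompact_Icc.prod (hXc.image (continuous_const.sub continuous_id))
  obtain ⟨C₂, hC₂⟩ := hTcomp.exists_bound_of_continuousOn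
    (hcont.mono (fun q hq => ⟨lt_of_lt_of_le hth hq.1.1, mem_univ _⟩))
  refine ⟨max (2 * M₁) (max C C₂ / m), ?_⟩
  intro p hp r hr
  obtain ⟨hp1, hp2⟩ := hKsub hp
  have hp1' : 0 < p.1 := hp1
  have hap : a ≤ p.1 := isMinOn_iff.mp hpa p hp
  have hpb' : p.1 ≤ b := isMaxOn_iff.mp hpb p hp
  have hδp : δ ≤ |p.2 - z| := isMinOn_iff.mp hpd p hp
  split_ifs with htr
  · by_cases hr2 : r ≤ R₀
    · -- small r
      have hs0 : 0 < r - p.1 := by linarith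
      have hnum : f (r - p.1) (z - p.2) ≤ max C C₂ := by
        by_cases hth2 : r - p.1 < th
        · refine le_trans (hC (r - p.1) (z - p.2) hs0 hth2 ?_) (le_max_left _ _)
          have : |z - p.2| = |p.2 - z| := abs_sub_comm _ _
          rw [this]
          linarith
        · push_neg at hth2
          have hmemT : ((r - p.1, z - p.2) : ℝ × ℝ) ∈
              (Icc th R₀) ×ˢ ((fun x : ℝ => z - x) '' (Prod.snd '' K)) := by
            refine ⟨⟨hth2, show r - p.1 ≤ R₀ by linarith⟩, ⟨p.2, ⟨p, hp, rfl⟩, rfl⟩⟩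
          have hb2 := hC₂ _ hmemT
          rw [Real.norm_eq_abs] at hb2
          exact le_trans (le_trans (le_abs_self _) hb2) (le_max_right C C₂)
      have hden : m ≤ f r z := isMinOn_iff.mp hr₀ r ⟨by linarith, hr2⟩
      have h1 : f (r - p.1) (z - p.2) / f r z ≤ max C C₂ / m := by
        apply div_le_div₀ (le_trans (hfnn _ _ hs0) hnum) hnum hm hden
      exact le_trans h1 (le_max_right _ _)
    · -- large r
      push_neg at hr2
      have hmx : (0:ℝ) ≤ max (max R₁ R₂) 0 := le_max_right _ _
      have hu1 : max (max R₁ R₂) 0 + 1 ≤ r - p.1 := by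
        have : R₀ < r := hr2
        rw [hR₀] at this
        linarith
      have huR1 : R₁ ≤ r - p.1 :=
        le_trans ((le_max_left R₁ R₂).trans (le_max_left _ 0)) (by linarith)
      have huR2 : R₂ ≤ r - p.1 :=
        le_trans ((le_max_right R₁ R₂).trans (le_max_left _ 0)) (by linarith)
      have hupos : 0 < r - p.1 := by linarith
      have hφu := hzpos _ hupos
      have hφr := hzpos r hr
      have h1 := hR₁ (r - p.1) huR1 p.2 ⟨p, hp, rfl⟩
      simp only [sub_zero] at h1
      rw [Real.dist_eq] at h1
      have hq2 : f (r - p.1) (z - p.2) / f (r - p.1) z ≤ 2 := by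
        have := (abs_lt.mp h1).1
        linarith
      have h2 := hM₁ (r - p.1) huR2 p.1 hp1'.le hpb'
      have e : r - p.1 + p.1 = r := by ring
      rw [e] at h2
      have h2' : f (r - p.1) z / f r z ≤ M₁ := by simpa using h2
      have heq : f (r - p.1) (z - p.2) / f r z
          = (f (r - p.1) (z - p.2) / f (r - p.1) z) * (f (r - p.1) z / f r z) := by
        field_simp
      rw [heq]
      calc (f (r - p.1) (z - p.2) / f (r - p.1) z) * (f (r - p.1) z / f r z)
          ≤ 2 * M₁ := mul_le_mul hq2 h2' (div_nonneg hφu.le hφr.le) (by norm_num)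
        _ ≤ max (2 * M₁) (max C C₂ / m) := le_max_left _ _
  · have : (0:ℝ) ≤ 2 * M₁ := by positivity
    exact le_trans this (le_max_left _ _)
end

section
/- If a filtered probability space has F_{0+} trivial on the event {τ > ε} for every ε in a set of full P_τ-measure accumulating at 0, and P(τ > 0) = 1, then F_{0+} is P-trivial: every A ∈ F_{0+} has P(A) ∈ {0,1}. More precisely: if for each admissible ε and each A ∈ F_{0+} one has P(A ∩ {τ > ε}) ∈ {0, P(τ > ε)}, then P(A) ∈ {0,1}. -/
open MeasureTheory Filter Set
open scoped ENNReal Topology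

/-! Since `τ > 0` almost surely and admissible `ε` accumulate at `0`, the nested events
`{τ > ε}` exhaust `Ω` up to a null set. Being nested, an `F_{0+}`-event `A` that is trivial on
each of them must be trivial on all of them in the same direction: either `A` is null on every
`{τ > ε}`, or `Aᶜ` is. Exhaustion then makes `A` null or conull. -/

theorem directed_setOf_lt {Ω ι : Type*} (ε : ι → ℝ) (τ : Ω → ℝ) :
    Directed (· ⊆ ·) fun i => {ω | ε i < τ ω} := by
  intro i j
  rcases le_total (ε i) (ε j) with hij | hji
  · exact ⟨i, subset_rfl, fun ω hω => hij.trans_lt hω⟩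
  · exact ⟨j, fun ω hω => hji.trans_lt hω, subset_rfl⟩

section

variable {Ω : Type*} {m : MeasurableSpace Ω} {μ : Measure Ω}

theorem measure_compl_inter_eq_zero_of_measure_inter_eq [IsFiniteMeasure μ] {A E : Set Ω}
    (hA : MeasurableSet A) (h : μ (A ∩ E) = μ E) : μ (Aᶜ ∩ E) = 0 := by
  have hsplit : μ (E ∩ A) + μ (E \ A) = μ E := measure_inter_add_sdiff E hA
  rw [inter_comm, h, sdiff_eq_compl_inter] at hsplit
  exact (ENNReal.add_right_inj (measure_ne_top μ E)).mp (hsplit.trans (add_zero _).symm)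

theorem forall_measure_inter_eq_zero_or_forall_measure_compl_inter_eq_zero {ι : Type*}
    {E : ι → Set Ω} (hE : Directed (· ⊆ ·) E) {A : Set Ω}
    (h : ∀ i, μ (A ∩ E i) = 0 ∨ μ (Aᶜ ∩ E i) = 0) :
    (∀ i, μ (A ∩ E i) = 0) ∨ ∀ i, μ (Aᶜ ∩ E i) = 0 := by
  by_contra! hne
  obtain ⟨⟨i, hi⟩, ⟨j, hj⟩⟩ := hne
  obtain ⟨k, hik, hjk⟩ := hE i j
  rcases h k with hk | hk
  · exact hi (measure_mono_null (inter_subset_inter_right A hik) hk)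
  · exact hj (measure_mono_null (inter_subset_inter_right Aᶜ hjk) hk)

theorem measure_eq_zero_of_forall_measure_inter_setOf_lt_eq_zero {ι : Type*} {τ : Ω → ℝ}
    (hτ : ∀ᵐ ω ∂μ, 0 < τ ω) {ε : ι → ℝ} (hε : ∀ δ, 0 < δ → ∃ i, ε i < δ) {B : Set Ω}
    (hB : ∀ i, μ (B ∩ {ω | ε i < τ ω}) = 0) : μ B = 0 := by
  choose i hi using fun n : ℕ => hε (1 / (n + 1)) Nat.one_div_pos_of_nat
  refine measure_mono_null_ae ?_ (measure_iUnion_null fun n => hB (i n))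
  filter_upwards [hτ] with ω hω hωB
  obtain ⟨n, hn⟩ := exists_nat_one_div_lt hω
  exact mem_iUnion.2 ⟨n, hωB, (hi n).trans hn⟩

end

theorem stmt18_general {Ω : Type*} [mΩ : MeasurableSpace Ω] (P : Measure Ω) [IsProbabilityMeasure P]
    (τ : Ω → ℝ) (hτpos : ∀ᵐ ω ∂P, 0 < τ ω)
    (𝔄 : Set ℝ)
    (F0 : MeasurableSpace Ω) (hF0 : F0 ≤ mΩ)
    (hacc : ∀ δ : ℝ, 0 < δ → ∃ ε : ℝ, 0 < ε ∧ ε < δ ∧ ε ∉ 𝔄)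
    (h : ∀ ε : ℝ, 0 < ε → ε ∉ 𝔄 → ∀ A : Set Ω, MeasurableSet[F0] A →
      P (A ∩ {ω | ε < τ ω}) = 0 ∨ P (A ∩ {ω | ε < τ ω}) = P {ω | ε < τ ω}) :
    ∀ A : Set Ω, MeasurableSet[F0] A → P A = 0 ∨ P A = 1 := by
  intro A hA
  let ε : {ε : ℝ // 0 < ε ∧ ε ∉ 𝔄} → ℝ := Subtype.val
  have hε : ∀ δ, 0 < δ → ∃ i, ε i < δ := fun δ hδ =>
    let ⟨e, he0, heδ, he𝔄⟩ := hacc δ hδ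
    ⟨⟨e, he0, he𝔄⟩, heδ⟩
  have htrivial : ∀ i, P (A ∩ {ω | ε i < τ ω}) = 0 ∨ P (Aᶜ ∩ {ω | ε i < τ ω}) = 0 :=
    fun i => (h i.1 i.2.1 i.2.2 A hA).imp_right
      (measure_compl_inter_eq_zero_of_measure_inter_eq (hF0 _ hA))
  rcases forall_measure_inter_eq_zero_or_forall_measure_compl_inter_eq_zero
      (directed_setOf_lt ε τ) htrivial with hA0 | hAc0
  · exact Or.inl (measure_eq_zero_of_forall_measure_inter_setOf_lt_eq_zero hτpos hε hA0)
  · exact Or.inr ((prob_compl_eq_zero_iff (hF0 _ hA)).mp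
      (measure_eq_zero_of_forall_measure_inter_setOf_lt_eq_zero hτpos hε hAc0))

/-- If `F0` (playing the role of `F_{0+}`) is trivial on the event `{τ > ε}` for every
admissible `ε` (i.e. `ε ∈ (0,∞) ∖ 𝔄` where `P_τ(𝔄) = 0` and admissible `ε` accumulate
at `0`), in the sense that `P(A ∩ {τ > ε}) ∈ {0, P(τ > ε)}` for every `A ∈ F0`, and
`P(τ > 0) = 1`, then `F0` is `P`-trivial: every `A ∈ F0` has `P(A) ∈ {0,1}`. -/
theorem stmt18 {Ω : Type*} [mΩ : MeasurableSpace Ω] (P : Measure Ω) [IsProbabilityMeasure P]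
    (τ : Ω → ℝ) (hτ : Measurable τ) (hτpos : ∀ᵐ ω ∂P, 0 < τ ω)
    (𝔄 : Set ℝ) (h𝔄 : Measure.map τ P 𝔄 = 0)
    (F0 : MeasurableSpace Ω) (hF0 : F0 ≤ mΩ)
    (hacc : ∀ δ : ℝ, 0 < δ → ∃ ε : ℝ, 0 < ε ∧ ε < δ ∧ ε ∉ 𝔄)
    (h : ∀ ε : ℝ, 0 < ε → ε ∉ 𝔄 → ∀ A : Set Ω, MeasurableSet[F0] A →
      P (A ∩ {ω | ε < τ ω}) = 0 ∨ P (A ∩ {ω | ε < τ ω}) = P {ω | ε < τ ω}) :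
    ∀ A : Set Ω, MeasurableSet[F0] A → P A = 0 ∨ P A = 1 :=
  stmt18_general (mΩ := mΩ) P τ hτpos 𝔄 F0 hF0 hacc h
end
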